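/- Let v be a vertex not in the k-core G_k, with E(v) neighbors in G_k. If coreness(v) = 1 in G and E(v) = 1, then every neighbor of v outside G_k has coreness at most 1 in G. -/

import Mathlib

open scoped Classical
open Finset

noncomputable section

variable {V : Type*} [Fintype V]

/-- `S` induces a subgraph of `G` in which every vertex has degree at least `k`. -/
def IsCoreSet (G : SimpleGraph V) (k : ℕ) (S : Finset V) : Prop :=
  ∀ v ∈ S, k ≤ (S.filter (G.Adj v)).card

/-- The vertex set of the `k`-core of `G`: all vertices lying in some induced
subgraph of minimum degree at least `k`. -/
def coreSet (G : SimpleGraph V) (k : ℕ) : Finset V :=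
  Finset.univ.filter fun v => ∃ S : Finset V, IsCoreSet G k S ∧ v ∈ S

/-- The coreness of `v`: the largest `k` such that `v` belongs to the `k`-core. -/
def coreness (G : SimpleGraph V) (v : V) : ℕ :=
  Nat.findGreatest (fun k => v ∈ coreSet G k) (Fintype.card V)

/-- The external information of `v` w.r.t. the `k`-core: the number of
neighbors of `v` that belong to the `k`-core. -/
def extInfo (G : SimpleGraph V) (k : ℕ) (v : V) : ℕ :=
  ((coreSet G k).filter (G.Adj v)).card

section

variable {G : SimpleGraph V} {k : ℕ} {S : Finset V} {v : V}

lemma IsCoreSet.subset_coreSet (hS : IsCoreSet G k S) : S ⊆ coreSet G k :=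
  fun x hx => mem_filter.2 ⟨mem_univ x, S, hS, hx⟩

lemma mem_coreSet_iff : v ∈ coreSet G k ↔ ∃ S, IsCoreSet G k S ∧ v ∈ S := by
  simp [coreSet]

lemma isCoreSet_coreSet (G : SimpleGraph V) (k : ℕ) : IsCoreSet G k (coreSet G k) := by
  intro x hx
  obtain ⟨S, hS, hxS⟩ := mem_coreSet_iff.1 hx
  exact (hS x hxS).trans (card_le_card (filter_subset_filter _ hS.subset_coreSet))

lemma coreSet_antitone (G : SimpleGraph V) : Antitone (coreSet G) :=
  fun _ _ hkl => IsCoreSet.subset_coreSet fun x hx => hkl.trans (isCoreSet_coreSet G _ x hx)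

lemma mem_coreSet_zero (G : SimpleGraph V) (v : V) : v ∈ coreSet G 0 :=
  (show IsCoreSet G 0 {v} from fun _ _ => Nat.zero_le _).subset_coreSet (mem_singleton_self v)

lemma le_card_of_mem_coreSet (hv : v ∈ coreSet G k) : k ≤ Fintype.card V :=
  (isCoreSet_coreSet G k v hv).trans (card_le_univ _)

lemma le_coreness_iff : k ≤ coreness G v ↔ v ∈ coreSet G k := by
  refine ⟨fun hk => coreSet_antitone G hk ?_,
    fun hv => Nat.le_findGreatest (le_card_of_mem_coreSet hv) hv⟩
  exact Nat.findGreatest_spec (P := fun j => v ∈ coreSet G j) (Nat.zero_le _) (mem_coreSet_zero G v)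

lemma mem_coreSet_of_le_extInfo (h : k ≤ extInfo G k v) : v ∈ coreSet G k := by
  have hT : IsCoreSet G k (insert v (coreSet G k)) := by
    intro x hx
    refine le_trans ?_ (card_le_card (filter_subset_filter _ (subset_insert v _)))
    rcases mem_insert.1 hx with rfl | hx
    · exact h
    · exact isCoreSet_coreSet G k x hx
  exact hT.subset_coreSet (mem_insert_self v _)

end

/- A neighbour `u ∉ G_k` of coreness `≥ 2` and the neighbour `w ∈ G_k ⊆ G_2` would give `v` two
neighbours in the 2-core, forcing `v` into the 2-core. -/
theorem neighbors_outside_core_coreness_le_one_general (G : SimpleGraph V) (k : ℕ) (hk : 2 ≤ k)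
    (v : V) (h1 : coreness G v = 1) (hE : extInfo G k v = 1) :
    ∀ u : V, G.Adj v u → u ∉ coreSet G k → coreness G u ≤ 1 := by
  intro u hvu hu
  by_contra! hcoreness
  obtain ⟨w, hw⟩ := card_eq_one.1 hE
  obtain ⟨hwk, hvw⟩ := mem_filter.1 (hw ▸ mem_singleton_self w)
  have hu2 : u ∈ coreSet G 2 := le_coreness_iff.1 hcoreness
  have hw2 : w ∈ coreSet G 2 := coreSet_antitone G hk hwk
  have huw : u ≠ w := fun h => hu (h ▸ hwk)
  have hext : 2 ≤ extInfo G 2 v :=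
    calc 2 = ({u, w} : Finset V).card := (card_pair huw).symm
      _ ≤ extInfo G 2 v := card_le_card <| by
        simp only [insert_subset_iff, singleton_subset_iff, mem_filter]
        exact ⟨⟨hu2, hvu⟩, hw2, hvw⟩
  have := le_coreness_iff.2 (mem_coreSet_of_le_extInfo hext)
  omega

theorem neighbors_outside_core_coreness_le_one (G : SimpleGraph V) (k : ℕ) (hk : 2 ≤ k)
    (v : V) (hv : v ∉ coreSet G k) (h1 : coreness G v = 1) (hE : extInfo G k v = 1) :
    ∀ u : V, G.Adj v u → u ∉ coreSet G k → coreness G u ≤ 1 :=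
  neighbors_outside_core_coreness_le_one_general G k hk v h1 hE

end
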